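/- arXiv:2605.28533 — 2 statements merged into one kernel-verified Lean document; each statement's English description precedes it below -/
import Mathlib

section
/- Under an approximated null distribution sequence, the process Ŝ_t = ∏_{i=1}^t K_i(A[D_i, X̃_i]) / E_{P̂_i^null}[K_i(A[D, X̃])] is a nonnegative martingale with mean 1 when the data (D_i, X̃_i) are independent with (D_i, X̃_i) ∼ P̂_i^null, provided each K_i is strictly positive and F_{i-1}-measurable. Consequently, for any α ∈ (0,1) and horizon T, P(∃ t ≤ T: Ŝ_t ≥ 1/α) ≤ α + d_TV(P^null_{⊗T}, P̂^null_{⊗T}) when the data are instead drawn i.i.d. from P^null. -/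
open MeasureTheory Finset

/-- Total variation distance between two measures. -/
noncomputable def dTV {Ω : Type*} [MeasurableSpace Ω] (P Q : Measure Ω) : ℝ :=
  ⨆ A : {A : Set Ω // MeasurableSet A}, |(P A).toReal - (Q A).toReal|

section Aux

open ProbabilityTheory

variable {ι : Type*} [Fintype ι] [DecidableEq ι] {α : ι → Type*} [∀ i, MeasurableSpace (α i)]
  (μ : ∀ i, Measure (α i)) [∀ i, IsProbabilityMeasure (μ i)]

theorem pi_map_eval' (i : ι) : (Measure.pi μ).map (Function.eval i) = μ i := by
  ext s hs
  rw [Measure.map_apply (measurable_pi_apply i) hs, Set.eval_preimage, Measure.pi_pi]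
  rw [Finset.prod_eq_single i (fun j _ hj => by
    rw [Function.update_of_ne hj]; exact measure_univ) (by simp)]
  rw [Function.update_self]

theorem indepFun_eval_restrict' (p : ι → Prop) [DecidablePred p] (i : ι) (hi : ¬ p i) :
    IndepFun (fun ω : ∀ j, α j => ω i) (fun (ω : ∀ j, α j) (j : Subtype p) => ω j)
      (Measure.pi μ) := by
  rw [indepFun_iff_map_prod_eq_prod_map_map (measurable_pi_apply i).aemeasurable
    (measurable_pi_lambda _ (fun j => measurable_pi_apply j.1)).aemeasurable]
  have hpres := measurePreserving_piEquivPiSubtypeProd μ p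
  have h1 : (Measure.pi μ).map (Function.eval i) = μ i := pi_map_eval' μ i
  have h2 : (Measure.pi μ).map (fun (ω : ∀ j, α j) (j : Subtype p) => ω j)
      = Measure.pi (fun j : Subtype p => μ j) := by
    have : (fun (ω : ∀ j, α j) (j : Subtype p) => ω j)
        = Prod.fst ∘ (MeasurableEquiv.piEquivPiSubtypeProd α p) := rfl
    rw [this, ← Measure.map_map measurable_fst (MeasurableEquiv.measurable _), hpres.map_eq,
      Measure.map_fst_prod, measure_univ, one_smul]
  have h3 : (fun ω : ∀ j, α j => (ω i, fun j : Subtype p => ω j))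
      = (Prod.map (Function.eval (⟨i, hi⟩ : {j // ¬ p j})) id) ∘ Prod.swap ∘
        (MeasurableEquiv.piEquivPiSubtypeProd α p) := rfl
  rw [h1, h2, h3, ← Function.comp_assoc, ← Measure.map_map
    (((measurable_pi_apply _).prodMap measurable_id).comp measurable_swap)
    (MeasurableEquiv.measurable _),
    hpres.map_eq, ← Measure.map_map ((measurable_pi_apply _).prodMap measurable_id)
    measurable_swap, Measure.prod_swap, ← Measure.map_prod_map _ _ (measurable_pi_apply _)
    measurable_id, Measure.map_id, pi_map_eval']

end Aux

open ProbabilityTheory in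
/-- With per-step strictly positive score functions `g i = K i ∘ A[·]`,
the normalized product process `Ŝ t ω = ∏_{i < t} g i (ω i) / E_{P̂ i}[g i]` is a
nonnegative mean-one martingale (w.r.t. the coordinate filtration) when the data are
independent with `ω i ∼ P̂ i`; consequently, when the data are instead drawn from the
true nulls `P i`, for any `α ∈ (0,1)` the running-maximum rejection probability is at
most `α + d_TV(⊗ P, ⊗ P̂)`. -/
theorem approximate_null_eprocess_martingale_and_robust_ville
    {𝓧 : Type*} [MeasurableSpace 𝓧] (T : ℕ)
    (P Phat : Fin T → Measure 𝓧)
    [∀ i, IsProbabilityMeasure (P i)] [∀ i, IsProbabilityMeasure (Phat i)]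
    (g : Fin T → 𝓧 → ℝ)
    (hg_pos : ∀ i x, 0 < g i x)
    (hg_meas : ∀ i, Measurable (g i))
    (hg_int : ∀ i, Integrable (g i) (Phat i))
    (Shat : ℕ → (Fin T → 𝓧) → ℝ)
    (hShat : ∀ t ω, Shat t ω =
      ∏ i ∈ Finset.univ.filter (fun i : Fin T => (i : ℕ) < t),
        g i (ω i) / ∫ x, g i x ∂(Phat i))
    (ℱ : Filtration ℕ (MeasurableSpace.pi (m := fun _ : Fin T => ‹_›)))
    (hℱ : ∀ t, ℱ t =
      MeasurableSpace.comap
        (fun (ω : Fin T → 𝓧) (i : {j : Fin T // (j : ℕ) < t}) => ω i.1)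
        MeasurableSpace.pi)
    (α : ℝ) (hα : α ∈ Set.Ioo (0 : ℝ) 1) :
    (∀ t ω, 0 ≤ Shat t ω) ∧
    Martingale Shat ℱ (Measure.pi Phat) ∧
    (∀ t, ∫ ω, Shat t ω ∂(Measure.pi Phat) = 1) ∧
    Measure.pi P {ω | ∃ t ≤ T, 1 / α ≤ Shat t ω} ≤
      ENNReal.ofReal (α + dTV (Measure.pi P) (Measure.pi Phat)) := by
  haveI : IsProbabilityMeasure (Measure.pi Phat) := by infer_instance
  haveI : IsProbabilityMeasure (Measure.pi P) := by infer_instance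
  set c : Fin T → ℝ := fun i => ∫ x, g i x ∂(Phat i) with hc_def
  have hc : ∀ i, 0 < c i := by
    intro i
    rw [hc_def]
    refine (integral_pos_iff_support_of_nonneg (fun x => (hg_pos i x).le) (hg_int i)).mpr ?_
    have : Function.support (g i) = Set.univ := by
      ext x; simp [Function.mem_support, (hg_pos i x).ne']
    rw [this]
    simp
  -- nonnegativity
  have hnonneg : ∀ t ω, 0 ≤ Shat t ω := by
    intro t ω
    rw [hShat]
    exact Finset.prod_nonneg fun i _ => div_nonneg (hg_pos i _).le (hc i).le
  -- global measurability
  have hSmeas : ∀ t, Measurable (Shat t) := by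
    intro t
    have : Shat t = fun ω => ∏ i ∈ Finset.univ.filter (fun i : Fin T => (i : ℕ) < t),
        g i (ω i) / c i := funext (hShat t)
    rw [this]
    exact Finset.measurable_prod _ fun i _ =>
      ((hg_meas i).comp (measurable_pi_apply i)).div_const _
  -- adapted
  have hadp : StronglyAdapted ℱ Shat := by
    intro t
    apply Measurable.stronglyMeasurable
    have h1 : Shat t = fun ω => ∏ i ∈ Finset.univ.filter (fun i : Fin T => (i : ℕ) < t),
        g i (ω i) / c i := funext (hShat t)
    rw [h1, hℱ t]
    apply Finset.measurable_prod
    intro i hi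
    have hit : (i : ℕ) < t := (Finset.mem_filter.mp hi).2
    have h2 : (fun ω : Fin T → 𝓧 => g i (ω i) / c i)
        = (fun v : {j : Fin T // (j : ℕ) < t} → 𝓧 => g i (v ⟨i, hit⟩) / c i)
          ∘ (fun (ω : Fin T → 𝓧) (j : {j : Fin T // (j : ℕ) < t}) => ω j.1) := rfl
    rw [h2]
    exact (((hg_meas i).comp (measurable_pi_apply _)).div_const _).comp
      (Measurable.of_comap_le le_rfl)
  -- integrability and mean one
  have key_int : ∀ t, Integrable (Shat t) (Measure.pi Phat) ∧
      ∫ ω, Shat t ω ∂(Measure.pi Phat) = 1 := by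
    intro t
    letI : ∀ i : Fin T, MeasureSpace ((fun _ : Fin T => 𝓧) i) := fun i => ⟨Phat i⟩
    have hvol : (volume : Measure (∀ i : Fin T, (fun _ : Fin T => 𝓧) i)) = Measure.pi Phat := rfl
    set F : (i : Fin T) → (fun _ : Fin T => 𝓧) i → ℝ :=
      fun i x => if (i : ℕ) < t then g i x / c i else 1 with hF_def
    have hrw : Shat t = fun ω : ∀ i : Fin T, (fun _ : Fin T => 𝓧) i =>
        ∏ i : Fin T, F i (ω i) := by
      funext ω
      rw [hShat, Finset.prod_filter]
    have hint_i : ∀ i : Fin T, Integrable (F i) (Phat i) := by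
      intro i
      by_cases h : (i : ℕ) < t
      · simp only [hF_def, h, if_true]; exact (hg_int i).div_const _
      · simp only [hF_def, h, if_false]; exact integrable_const _
    have hone : ∀ i : Fin T, ∫ x, F i x ∂(Phat i) = 1 := by
      intro i
      by_cases h : (i : ℕ) < t
      · simp only [hF_def, h, if_true]
        rw [integral_div]
        exact div_self (hc i).ne'
      · simp only [hF_def, h, if_false]
        simp
    constructor
    · rw [hrw]
      exact Integrable.fintype_prod_dep (E := fun _ : Fin T => 𝓧) (f := F) (μ := Phat) hint_i
    · rw [hrw]
      have h2 := integral_fintype_prod_eq_prod (E := fun _ : Fin T => 𝓧) (μ := Phat) F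
      exact h2.trans (Finset.prod_eq_one fun i _ => hone i)
  -- one-step condexp
  have hstep : ∀ n, Shat n =ᵐ[Measure.pi Phat] (Measure.pi Phat)[Shat (n + 1) | ℱ n] := by
    intro n
    by_cases hn : n < T
    · set i : Fin T := ⟨n, hn⟩ with hi_def
      have hfil : Finset.univ.filter (fun j : Fin T => (j : ℕ) < n + 1)
          = insert i (Finset.univ.filter (fun j : Fin T => (j : ℕ) < n)) := by
        ext j
        simp only [Finset.mem_filter, Finset.mem_insert, Finset.mem_univ, true_and,
          Nat.lt_succ_iff, le_iff_lt_or_eq, Fin.ext_iff, hi_def]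
        tauto
      have hmul : Shat (n + 1) = Shat n * (fun ω => g i (ω i) / c i) := by
        funext ω
        rw [Pi.mul_apply, hShat, hShat, hfil, Finset.prod_insert (by simp [hi_def]), mul_comm]
      have hSM : StronglyMeasurable[MeasurableSpace.comap (fun ω : Fin T → 𝓧 => ω i)
          inferInstance] (fun ω : Fin T → 𝓧 => g i (ω i) / c i) :=
        Measurable.stronglyMeasurable
          (((hg_meas i).comp (Measurable.of_comap_le le_rfl)).div_const _)
      have hindep : Indep (MeasurableSpace.comap (fun ω : Fin T → 𝓧 => ω i) inferInstance)
          (ℱ n) (Measure.pi Phat) := by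
        rw [hℱ n]
        exact (IndepFun_iff_Indep _ _ _).mp
          (indepFun_eval_restrict' Phat (fun j : Fin T => (j : ℕ) < n) i (by simp [hi_def]))
      have hcond2 := condExp_indep_eq (μ := Measure.pi Phat)
        ((measurable_pi_apply i).comap_le) (ℱ.le n) hSM hindep
      have hintmul : Integrable (Shat n * (fun ω => g i (ω i) / c i)) (Measure.pi Phat) := by
        rw [← hmul]; exact (key_int (n + 1)).1
      have hint_h : Integrable (fun ω : Fin T → 𝓧 => g i (ω i) / c i) (Measure.pi Phat) := by
        have h0 : Integrable (fun x => g i x / c i) ((Measure.pi Phat).map (Function.eval i)) := by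
          rw [pi_map_eval']; exact (hg_int i).div_const _
        exact (integrable_map_measure ((hg_meas i).div_const _).aestronglyMeasurable
          (measurable_pi_apply i).aemeasurable).mp h0
      have hfm : AEStronglyMeasurable (fun x => g i x / c i)
          ((Measure.pi Phat).map (Function.eval i)) := by
        rw [pi_map_eval' Phat i]
        exact ((hg_meas i).div_const _).aestronglyMeasurable
      have hmean : ∫ ω : Fin T → 𝓧, g i (ω i) / c i ∂(Measure.pi Phat) = 1 := by
        have h1 : ∫ x, g i x / c i ∂(Phat i) = 1 := by
          rw [integral_div]; exact div_self (hc i).ne'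
        rw [← pi_map_eval' Phat i] at h1
        rwa [integral_map (measurable_pi_apply i).aemeasurable hfm] at h1
      have hcond := condExp_mul_of_stronglyMeasurable_left (hadp n) hintmul hint_h
      rw [hmul]
      filter_upwards [hcond, hcond2] with ω h1 h2
      rw [h1, Pi.mul_apply, h2, hmean, mul_one]
    · have heq : Shat (n + 1) = Shat n := by
        funext ω
        rw [hShat, hShat]
        have : ∀ j : Fin T, ((j : ℕ) < n + 1) = ((j : ℕ) < n) := by
          intro j
          have hj := j.2
          simp only [eq_iff_iff]
          constructor <;> intro _ <;> omega
        simp only [this]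
      rw [heq, condExp_of_stronglyMeasurable (ℱ.le n) (hadp n) (key_int n).1]
  have hmart : Martingale Shat ℱ (Measure.pi Phat) :=
    martingale_nat hadp (fun n => (key_int n).1) hstep
  refine ⟨hnonneg, hmart, fun t => (key_int t).2, ?_⟩
  set E : Set (Fin T → 𝓧) := {ω | ∃ t ≤ T, 1 / α ≤ Shat t ω} with hE_def
  have hE : MeasurableSet E := by
    have h1 : E = ⋃ t ∈ Finset.range (T + 1), {ω | 1 / α ≤ Shat t ω} := by
      ext ω
      simp [hE_def, Nat.lt_succ_iff]
    rw [h1]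
    exact (Finset.range (T + 1)).measurableSet_biUnion fun t _ =>
      measurableSet_le measurable_const (hSmeas t)
  have hεc : ((Real.toNNReal (1 / α)) : ℝ) = 1 / α :=
    Real.coe_toNNReal _ (by have h0 := hα.1; positivity)
  have hnn : (0 : ℕ → (Fin T → 𝓧) → ℝ) ≤ Shat := fun n ω => hnonneg n ω
  have hmax := maximal_ineq hmart.submartingale hnn (ε := Real.toNNReal (1 / α)) T
  have hseteq : {ω | ((Real.toNNReal (1 / α)) : ℝ) ≤
      (Finset.range (T + 1)).sup' Finset.nonempty_range_add_one fun k => Shat k ω} = E := by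
    ext ω
    rw [hE_def]
    simp only [Set.mem_setOf_eq, hεc, Finset.le_sup'_iff, Finset.mem_range, Nat.lt_succ_iff]
  rw [hseteq] at hmax
  have hub : ENNReal.ofReal (∫ ω in E, Shat T ω ∂(Measure.pi Phat)) ≤ 1 := by
    have hsi := setIntegral_le_integral (key_int T).1
      (Filter.Eventually.of_forall (hnonneg T)) (s := E)
    calc ENNReal.ofReal (∫ ω in E, Shat T ω ∂(Measure.pi Phat))
        ≤ ENNReal.ofReal (∫ ω, Shat T ω ∂(Measure.pi Phat)) := ENNReal.ofReal_le_ofReal hsi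
      _ = 1 := by rw [(key_int T).2, ENNReal.ofReal_one]
  have hmu : Measure.pi Phat E ≤ ENNReal.ofReal α := by
    have hkey : ENNReal.ofReal (1 / α) * Measure.pi Phat E ≤ 1 := by
      have h2 := hmax.trans hub
      exact h2
    have hα' : ENNReal.ofReal (1 / α) = (ENNReal.ofReal α)⁻¹ := by
      rw [one_div, ← ENNReal.ofReal_inv_of_pos hα.1]
    calc Measure.pi Phat E
        = ENNReal.ofReal α * ((ENNReal.ofReal α)⁻¹ * Measure.pi Phat E) := by
          rw [← mul_assoc, ENNReal.mul_inv_cancel (by simp [hα.1]) (by simp), one_mul]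
      _ ≤ ENNReal.ofReal α * 1 := mul_le_mul_right (by rw [← hα']; exact hkey) _
      _ = ENNReal.ofReal α := mul_one _
  have hbdd : BddAbove (Set.range fun A : {A : Set (Fin T → 𝓧) // MeasurableSet A} =>
      |((Measure.pi P) A).toReal - ((Measure.pi Phat) A).toReal|) := by
    refine ⟨1, ?_⟩
    rintro x ⟨A, rfl⟩
    have h1 : ((Measure.pi P) A).toReal ≤ 1 := by
      apply ENNReal.toReal_le_of_le_ofReal zero_le_one
      rw [ENNReal.ofReal_one]
      exact prob_le_one
    have h2 : ((Measure.pi Phat) A).toReal ≤ 1 := by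
      apply ENNReal.toReal_le_of_le_ofReal zero_le_one
      rw [ENNReal.ofReal_one]
      exact prob_le_one
    have h3 : (0 : ℝ) ≤ ((Measure.pi P) A).toReal := ENNReal.toReal_nonneg
    have h4 : (0 : ℝ) ≤ ((Measure.pi Phat) A).toReal := ENNReal.toReal_nonneg
    rw [abs_sub_le_iff]
    constructor <;> linarith
  have hdtv : ((Measure.pi P) E).toReal - ((Measure.pi Phat) E).toReal
      ≤ dTV (Measure.pi P) (Measure.pi Phat) :=
    (le_abs_self _).trans (le_ciSup hbdd ⟨E, hE⟩)
  have hPhatα : ((Measure.pi Phat) E).toReal ≤ α := by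
    have h5 := ENNReal.toReal_mono ENNReal.ofReal_ne_top hmu
    rwa [ENNReal.toReal_ofReal hα.1.le] at h5
  have hfinal : ((Measure.pi P) E).toReal ≤ α + dTV (Measure.pi P) (Measure.pi Phat) := by
    linarith
  calc Measure.pi P E
      = ENNReal.ofReal (((Measure.pi P) E).toReal) :=
        (ENNReal.ofReal_toReal (measure_ne_top _ _)).symm
    _ ≤ ENNReal.ofReal (α + dTV (Measure.pi P) (Measure.pi Phat)) :=
        ENNReal.ofReal_le_ofReal hfinal
end

section
/- If X <_FOSD Y strictly (i.e., F_X(t) ≥ F_Y(t) everywhere with strict inequality on a set of positive Lebesgue measure), then E[φ(X)] < E[φ(Y)] for every strictly increasing function φ: ℝ → ℝ for which both expectations exist and are finite. -/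
open MeasureTheory Set

/-- Layer cake decomposition for an integrable function on a probability space. -/
private lemma layer_decomp {Ω : Type*} [MeasurableSpace Ω] (κ : Measure Ω)
    [IsProbabilityMeasure κ] (Z : Ω → ℝ) (hint : Integrable Z κ) :
    Integrable (fun t => (κ {ω | t < Z ω}).toReal) (volume.restrict (Set.Ioi 0)) ∧
    Integrable (fun t => (κ {ω | Z ω < -t}).toReal) (volume.restrict (Set.Ioi 0)) ∧
    ∫ ω, Z ω ∂κ = (∫ t in Set.Ioi 0, (κ {ω | t < Z ω}).toReal)
      - ∫ t in Set.Ioi 0, (κ {ω | Z ω < -t}).toReal := by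
  have hP : Integrable (fun ω => max (Z ω) 0) κ := hint.pos_part
  have hN : Integrable (fun ω => max (-Z ω) 0) κ := hint.neg_part
  have hPnn : 0 ≤ᵐ[κ] fun ω => max (Z ω) 0 :=
    Filter.Eventually.of_forall fun ω => le_max_right _ _
  have hNnn : 0 ≤ᵐ[κ] fun ω => max (-Z ω) 0 :=
    Filter.Eventually.of_forall fun ω => le_max_right _ _
  have hsetP : ∀ t ∈ Set.Ioi (0:ℝ), {ω | t < max (Z ω) 0} = {ω | t < Z ω} := by
    intro t ht
    ext ω
    simp only [Set.mem_setOf_eq, lt_max_iff]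
    exact ⟨fun h => h.elim id (fun h' => absurd h' (lt_asymm ht)), Or.inl⟩
  have hsetN : ∀ t ∈ Set.Ioi (0:ℝ), {ω | t < max (-Z ω) 0} = {ω | Z ω < -t} := by
    intro t ht
    ext ω
    simp only [Set.mem_setOf_eq, lt_max_iff]
    constructor
    · rintro (h | h)
      · linarith
      · exact absurd h (lt_asymm ht)
    · intro h; left; linarith
  have measP : Measurable fun t : ℝ => κ {a | t < max (Z a) 0} :=
    Antitone.measurable fun _ _ hst => measure_mono fun a h => lt_of_le_of_lt hst h
  have measN : Measurable fun t : ℝ => κ {a | t < max (-Z a) 0} :=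
    Antitone.measurable fun _ _ hst => measure_mono fun a h => lt_of_le_of_lt hst h
  have keyP := lintegral_eq_lintegral_meas_lt κ hPnn hP.aemeasurable
  have keyN := lintegral_eq_lintegral_meas_lt κ hNnn hN.aemeasurable
  have finP : (∫⁻ t in Set.Ioi (0:ℝ), κ {a | t < max (Z a) 0}) ≠ ⊤ := by
    rw [← keyP]; exact hP.lintegral_lt_top.ne
  have finN : (∫⁻ t in Set.Ioi (0:ℝ), κ {a | t < max (-Z a) 0}) ≠ ⊤ := by
    rw [← keyN]; exact hN.lintegral_lt_top.ne
  have intP' : Integrable (fun t => (κ {a | t < max (Z a) 0}).toReal)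
      (volume.restrict (Set.Ioi 0)) :=
    integrable_toReal_of_lintegral_ne_top measP.aemeasurable finP
  have intN' : Integrable (fun t => (κ {a | t < max (-Z a) 0}).toReal)
      (volume.restrict (Set.Ioi 0)) :=
    integrable_toReal_of_lintegral_ne_top measN.aemeasurable finN
  have intP : Integrable (fun t => (κ {ω | t < Z ω}).toReal)
      (volume.restrict (Set.Ioi 0)) := by
    refine intP'.congr ?_
    filter_upwards [ae_restrict_mem measurableSet_Ioi] with t ht
    rw [hsetP t ht]
  have intN : Integrable (fun t => (κ {ω | Z ω < -t}).toReal)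
      (volume.restrict (Set.Ioi 0)) := by
    refine intN'.congr ?_
    filter_upwards [ae_restrict_mem measurableSet_Ioi] with t ht
    rw [hsetN t ht]
  refine ⟨intP, intN, ?_⟩
  have eqP : ∫ ω, max (Z ω) 0 ∂κ = ∫ t in Set.Ioi 0, (κ {ω | t < Z ω}).toReal := by
    rw [hP.integral_eq_integral_meas_lt hPnn]
    refine setIntegral_congr_fun measurableSet_Ioi fun t ht => ?_
    rw [hsetP t ht]
    rfl
  have eqN : ∫ ω, max (-Z ω) 0 ∂κ = ∫ t in Set.Ioi 0, (κ {ω | Z ω < -t}).toReal := by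
    rw [hN.integral_eq_integral_meas_lt hNnn]
    refine setIntegral_congr_fun measurableSet_Ioi fun t ht => ?_
    rw [hsetN t ht]
    rfl
  have hzz : ∀ ω, Z ω = max (Z ω) 0 - max (-Z ω) 0 := by
    intro ω
    rcases le_total (Z ω) 0 with h | h
    · rw [max_eq_right h, max_eq_left (neg_nonneg.mpr h)]; ring
    · rw [max_eq_left h, max_eq_right (neg_nonpos.mpr h)]; ring
  calc ∫ ω, Z ω ∂κ = ∫ ω, (max (Z ω) 0 - max (-Z ω) 0) ∂κ :=
        integral_congr_ae (Filter.Eventually.of_forall hzz)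
    _ = (∫ ω, max (Z ω) 0 ∂κ) - ∫ ω, max (-Z ω) 0 ∂κ := integral_sub hP hN
    _ = _ := by rw [eqP, eqN]

/-- From domination of closed lower tails deduce domination of open lower tails. -/
private lemma dom_lt_of_dom_le {Ω : Type*} [MeasurableSpace Ω] {Ω' : Type*} [MeasurableSpace Ω']
    (μ : Measure Ω) (ν : Measure Ω') (U : Ω → ℝ) (V : Ω' → ℝ)
    (h : ∀ t : ℝ, ν {ω | V ω ≤ t} ≤ μ {ω | U ω ≤ t}) (s : ℝ) :
    ν {ω | V ω < s} ≤ μ {ω | U ω < s} := by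
  have hsetV : {ω : Ω' | V ω < s} = ⋃ n : ℕ, {ω | V ω ≤ s - 1/(n+1)} := by
    ext ω
    simp only [Set.mem_iUnion, Set.mem_setOf_eq]
    constructor
    · intro hw
      obtain ⟨n, hn⟩ := exists_nat_one_div_lt (sub_pos.mpr hw)
      exact ⟨n, by linarith⟩
    · rintro ⟨n, hn⟩
      have hpos : (0:ℝ) < 1/(n+1) := by positivity
      linarith
  have hmono : Monotone fun n : ℕ => {ω : Ω' | V ω ≤ s - 1/(n+1)} := by
    intro m n hmn ω hω
    simp only [Set.mem_setOf_eq] at *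
    have h1 : (1:ℝ)/(n+1) ≤ 1/(m+1) := by
      apply one_div_le_one_div_of_le
      · positivity
      · exact_mod_cast add_le_add_left (Nat.cast_le.mpr hmn) 1
    linarith
  rw [hsetV, hmono.measure_iUnion]
  refine iSup_le fun n => le_trans (h _) (measure_mono ?_)
  intro ω hω
  simp only [Set.mem_setOf_eq] at *
  have hpos : (0:ℝ) < 1/(n+1) := by positivity
  linarith

/-- Abstract comparison: if the CDF of `ZX` dominates that of `ZY` (for both closed and
open tails), strictly by `ε` on a window `(0, b')`, then `E[ZX] < E[ZY]`. -/
private lemma integral_lt_of_dom {Ω : Type*} [MeasurableSpace Ω] {Ω' : Type*}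
    [MeasurableSpace Ω'] (μ : Measure Ω) (ν : Measure Ω')
    [IsProbabilityMeasure μ] [IsProbabilityMeasure ν]
    (ZX : Ω → ℝ) (ZY : Ω' → ℝ) (mZX : Measurable ZX) (mZY : Measurable ZY)
    (hintZX : Integrable ZX μ) (hintZY : Integrable ZY ν)
    (hdomZ : ∀ t : ℝ, ν {ω | ZY ω ≤ t} ≤ μ {ω | ZX ω ≤ t})
    (hdomZlt : ∀ t : ℝ, ν {ω | ZY ω < t} ≤ μ {ω | ZX ω < t})
    (b' ε : ℝ) (hb'pos : 0 < b') (hεpos : 0 < ε)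
    (window : ∀ t ∈ Set.Ioo (0:ℝ) b',
      (ν {ω | ZY ω ≤ t}).toReal + ε ≤ (μ {ω | ZX ω ≤ t}).toReal) :
    ∫ ω, ZX ω ∂μ < ∫ ω, ZY ω ∂ν := by
  obtain ⟨iX1, iX2, eqX⟩ := layer_decomp μ ZX hintZX
  obtain ⟨iY1, iY2, eqY⟩ := layer_decomp ν ZY hintZY
  have survX : ∀ t : ℝ, (μ {ω | t < ZX ω}).toReal = 1 - (μ {ω | ZX ω ≤ t}).toReal := by
    intro t
    have hms : MeasurableSet {ω | ZX ω ≤ t} := mZX measurableSet_Iic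
    have hcompl : {ω : Ω | t < ZX ω} = {ω | ZX ω ≤ t}ᶜ := by
      ext ω; simp [not_le]
    rw [hcompl, measure_compl hms (measure_ne_top μ _), measure_univ,
      ENNReal.toReal_sub_of_le prob_le_one ENNReal.one_ne_top, ENNReal.toReal_one]
  have survY : ∀ t : ℝ, (ν {ω | t < ZY ω}).toReal = 1 - (ν {ω | ZY ω ≤ t}).toReal := by
    intro t
    have hms : MeasurableSet {ω | ZY ω ≤ t} := mZY measurableSet_Iic
    have hcompl : {ω : Ω' | t < ZY ω} = {ω | ZY ω ≤ t}ᶜ := by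
      ext ω; simp [not_le]
    rw [hcompl, measure_compl hms (measure_ne_top ν _), measure_univ,
      ENNReal.toReal_sub_of_le prob_le_one ENNReal.one_ne_top, ENNReal.toReal_one]
  have hmono1 : ∀ t : ℝ, (μ {ω | t < ZX ω}).toReal ≤ (ν {ω | t < ZY ω}).toReal := by
    intro t
    rw [survX, survY]
    have := (ENNReal.toReal_le_toReal (measure_ne_top ν _) (measure_ne_top μ _)).mpr (hdomZ t)
    linarith
  have hmono2 : ∀ t : ℝ, (ν {ω | ZY ω < -t}).toReal ≤ (μ {ω | ZX ω < -t}).toReal := fun t =>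
    (ENNReal.toReal_le_toReal (measure_ne_top ν _) (measure_ne_top μ _)).mpr (hdomZlt (-t))
  have window' : ∀ t ∈ Set.Ioo (0:ℝ) b',
      (μ {ω | t < ZX ω}).toReal + ε ≤ (ν {ω | t < ZY ω}).toReal := by
    intro t ht
    rw [survX, survY]
    have := window t ht
    linarith
  have iInd : Integrable ((Set.Ioo (0:ℝ) b').indicator fun _ => ε)
      (volume.restrict (Set.Ioi 0)) := by
    refine Integrable.restrict ?_
    rw [integrable_indicator_iff measurableSet_Ioo]
    exact (integrableOn_const_iff).mpr (Or.inr measure_Ioo_lt_top)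
  have key1 : (∫ t in Set.Ioi (0:ℝ), (μ {ω | t < ZX ω}).toReal) + ε * b'
      ≤ ∫ t in Set.Ioi (0:ℝ), (ν {ω | t < ZY ω}).toReal := by
    have hle : (∫ t in Set.Ioi (0:ℝ), ((μ {ω | t < ZX ω}).toReal
        + (Set.Ioo (0:ℝ) b').indicator (fun _ => ε) t))
        ≤ ∫ t in Set.Ioi (0:ℝ), (ν {ω | t < ZY ω}).toReal := by
      refine integral_mono_ae (iX1.add iInd) iY1 ?_
      filter_upwards [ae_restrict_mem measurableSet_Ioi] with t ht
      by_cases h : t ∈ Set.Ioo (0:ℝ) b'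
      · rw [Set.indicator_of_mem h]
        exact window' t h
      · rw [Set.indicator_of_notMem h]
        simpa using hmono1 t
    rw [integral_add iX1 iInd] at hle
    have hind : (∫ t in Set.Ioi (0:ℝ), (Set.Ioo (0:ℝ) b').indicator (fun _ => ε) t)
        = ε * b' := by
      rw [integral_indicator measurableSet_Ioo,
        Measure.restrict_restrict measurableSet_Ioo,
        Set.inter_eq_self_of_subset_left (fun x hx => hx.1),
        setIntegral_const, Real.volume_real_Ioo_of_le (by linarith)]
      simp [mul_comm]
    rw [hind] at hle
    exact hle
  have key2 : (∫ t in Set.Ioi (0:ℝ), (ν {ω | ZY ω < -t}).toReal)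
      ≤ ∫ t in Set.Ioi (0:ℝ), (μ {ω | ZX ω < -t}).toReal :=
    integral_mono_ae iY2 iX2 (Filter.Eventually.of_forall fun t => hmono2 t)
  have hεb' : 0 < ε * b' := mul_pos hεpos hb'pos
  rw [eqX, eqY]
  linarith

/-- If `X <_FOSD Y` strictly (the CDF of `X` dominates that of `Y`
everywhere, strictly on a set of positive Lebesgue measure), then
`E[φ(X)] < E[φ(Y)]` for every strictly increasing `φ` with both expectations
existing (finite). -/
theorem strict_fosd_strict_expectation
    {Ω : Type*} [MeasurableSpace Ω] {Ω' : Type*} [MeasurableSpace Ω']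
    (μ : Measure Ω) (ν : Measure Ω')
    [IsProbabilityMeasure μ] [IsProbabilityMeasure ν]
    (X : Ω → ℝ) (Y : Ω' → ℝ) (hX : Measurable X) (hY : Measurable Y)
    (hdom : ∀ t : ℝ, ν {ω | Y ω ≤ t} ≤ μ {ω | X ω ≤ t})
    (hstrict : 0 < MeasureTheory.volume {t : ℝ | ν {ω | Y ω ≤ t} < μ {ω | X ω ≤ t}})
    (φ : ℝ → ℝ) (hφ : StrictMono φ)
    (hintX : Integrable (fun ω => φ (X ω)) μ)
    (hintY : Integrable (fun ω => φ (Y ω)) ν) :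
    ∫ ω, φ (X ω) ∂μ < ∫ ω, φ (Y ω) ∂ν := by
  classical
  have hφm : Measurable φ := hφ.monotone.measurable
  -- Domination passes through φ
  have hdomφ : ∀ u : ℝ, ν {ω | φ (Y ω) ≤ u} ≤ μ {ω | φ (X ω) ≤ u} := by
    intro u
    set A : Set ℝ := {x | φ x ≤ u} with hA
    have hYA : {ω : Ω' | φ (Y ω) ≤ u} = Y ⁻¹' A := rfl
    have hXA : {ω : Ω | φ (X ω) ≤ u} = X ⁻¹' A := rfl
    by_cases hne : A.Nonempty
    · by_cases hbd : ∃ z, z ∉ A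
      · obtain ⟨z, hz⟩ := hbd
        have hub : ∀ x ∈ A, x ≤ z := by
          intro x hx
          by_contra hxz
          push_neg at hxz
          exact hz (le_trans (hφ.monotone hxz.le) hx)
        have hbdd : BddAbove A := ⟨z, hub⟩
        by_cases hs : sSup A ∈ A
        · have hAeq : A = Set.Iic (sSup A) := by
            ext x
            constructor
            · exact fun hx => le_csSup hbdd hx
            · intro hx; exact le_trans (hφ.monotone hx) hs
          rw [hYA, hXA, hAeq]
          exact hdom (sSup A)
        · have hAeq : A = Set.Iio (sSup A) := by
            ext x
            constructor
            · intro hx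
              refine lt_of_le_of_ne (le_csSup hbdd hx) ?_
              rintro rfl
              exact hs hx
            · intro hx
              obtain ⟨y, hy, hxy⟩ := exists_lt_of_lt_csSup hne hx
              exact le_trans (hφ.monotone hxy.le) hy
          rw [hYA, hXA, hAeq]
          exact dom_lt_of_dom_le μ ν X Y hdom (sSup A)
      · push_neg at hbd
        have h1 : {ω : Ω' | φ (Y ω) ≤ u} = Set.univ :=
          Set.eq_univ_of_forall fun ω => hbd (Y ω)
        have h2 : {ω : Ω | φ (X ω) ≤ u} = Set.univ :=
          Set.eq_univ_of_forall fun ω => hbd (X ω)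
        rw [h1, h2]
        simp
    · rw [Set.not_nonempty_iff_eq_empty] at hne
      have h1 : {ω : Ω' | φ (Y ω) ≤ u} = ∅ := by
        rw [hYA, hne]
        simp
      rw [h1]
      simp
  have hdomφ_lt : ∀ s : ℝ, ν {ω | φ (Y ω) < s} ≤ μ {ω | φ (X ω) < s} :=
    dom_lt_of_dom_le μ ν (fun ω => φ (X ω)) (fun ω => φ (Y ω)) hdomφ
  -- a strict point and a window to its right
  obtain ⟨t0, ht0⟩ : {t : ℝ | ν {ω | Y ω ≤ t} < μ {ω | X ω ≤ t}}.Nonempty :=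
    nonempty_of_measure_ne_zero hstrict.ne'
  simp only [Set.mem_setOf_eq] at ht0
  have hrc : ∃ n : ℕ, ν {ω | Y ω ≤ t0 + 1/(n+1)} < μ {ω | X ω ≤ t0} := by
    have hinter : (⋂ n : ℕ, {ω : Ω' | Y ω ≤ t0 + 1/(n+1)}) = {ω | Y ω ≤ t0} := by
      ext ω
      simp only [Set.mem_iInter, Set.mem_setOf_eq]
      constructor
      · intro h
        by_contra hc
        push_neg at hc
        obtain ⟨n, hn⟩ := exists_nat_one_div_lt (sub_pos.mpr hc)
        have := h n
        push_cast at hn this ⊢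
        linarith
      · intro h n
        have hpos : (0:ℝ) < 1/(n+1) := by positivity
        linarith
    have hanti : Antitone fun n : ℕ => {ω : Ω' | Y ω ≤ t0 + 1/(n+1)} := by
      intro m n hmn ω hω
      simp only [Set.mem_setOf_eq] at *
      have h1 : (1:ℝ)/(n+1) ≤ 1/(m+1) := by
        apply one_div_le_one_div_of_le
        · positivity
        · exact_mod_cast add_le_add_left (Nat.cast_le.mpr hmn) 1
      linarith
    have hmeas : ∀ n : ℕ, NullMeasurableSet {ω : Ω' | Y ω ≤ t0 + 1/(n+1)} ν :=
      fun n => (hY measurableSet_Iic).nullMeasurableSet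
    have hfin : ∃ n : ℕ, ν {ω : Ω' | Y ω ≤ t0 + 1/(n+1)} ≠ ⊤ :=
      ⟨0, measure_ne_top ν _⟩
    have heq := hanti.measure_iInter hmeas hfin
    rw [hinter] at heq
    rw [heq] at ht0
    exact iInf_lt_iff.mp ht0
  obtain ⟨n, hn⟩ := hrc
  have hb : t0 < t0 + 1/(n+1) := by
    have : (0:ℝ) < 1/(n+1) := by positivity
    linarith
  -- apply the abstract lemma to the shifted functions
  have hεpos : 0 < (μ {ω | X ω ≤ t0}).toReal - (ν {ω | Y ω ≤ t0 + 1/(n+1)}).toReal := by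
    have := (ENNReal.toReal_lt_toReal (measure_ne_top ν _) (measure_ne_top μ _)).mpr hn
    linarith
  have key : ∫ ω, (φ (X ω) - φ t0) ∂μ < ∫ ω, (φ (Y ω) - φ t0) ∂ν := by
    refine integral_lt_of_dom μ ν (fun ω => φ (X ω) - φ t0) (fun ω => φ (Y ω) - φ t0)
      ((hφm.comp hX).sub measurable_const) ((hφm.comp hY).sub measurable_const)
      (hintX.sub (integrable_const _)) (hintY.sub (integrable_const _))
      ?_ ?_ (φ (t0 + 1/(n+1)) - φ t0)
      ((μ {ω | X ω ≤ t0}).toReal - (ν {ω | Y ω ≤ t0 + 1/(n+1)}).toReal)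
      (sub_pos.mpr (hφ hb)) hεpos ?_
    · intro t
      have e1 : {ω : Ω | φ (X ω) - φ t0 ≤ t} = {ω | φ (X ω) ≤ t + φ t0} := by
        ext ω; simp [sub_le_iff_le_add]
      have e2 : {ω : Ω' | φ (Y ω) - φ t0 ≤ t} = {ω | φ (Y ω) ≤ t + φ t0} := by
        ext ω; simp [sub_le_iff_le_add]
      rw [e1, e2]
      exact hdomφ (t + φ t0)
    · intro t
      have e1 : {ω : Ω | φ (X ω) - φ t0 < t} = {ω | φ (X ω) < t + φ t0} := by
        ext ω; simp [sub_lt_iff_lt_add]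
      have e2 : {ω : Ω' | φ (Y ω) - φ t0 < t} = {ω | φ (Y ω) < t + φ t0} := by
        ext ω; simp [sub_lt_iff_lt_add]
      rw [e1, e2]
      exact hdomφ_lt (t + φ t0)
    · intro t ht
      have h1 : ν {ω | φ (Y ω) - φ t0 ≤ t} ≤ ν {ω | Y ω ≤ t0 + 1/(n+1)} := by
        apply measure_mono
        intro ω hω
        simp only [Set.mem_setOf_eq] at *
        have h2 : φ (Y ω) < φ (t0 + 1/(n+1)) := by
          have := ht.2
          linarith
        exact (hφ.lt_iff_lt.mp h2).le
      have h2 : μ {ω | X ω ≤ t0} ≤ μ {ω | φ (X ω) - φ t0 ≤ t} := by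
        apply measure_mono
        intro ω hω
        simp only [Set.mem_setOf_eq] at *
        have h3 : φ (X ω) ≤ φ t0 := hφ.monotone hω
        have ht1 := ht.1
        linarith
      have h1' := (ENNReal.toReal_le_toReal (measure_ne_top ν _) (measure_ne_top ν _)).mpr h1
      have h2' := (ENNReal.toReal_le_toReal (measure_ne_top μ _) (measure_ne_top μ _)).mpr h2
      linarith
  have hZXint : ∫ ω, (φ (X ω) - φ t0) ∂μ = (∫ ω, φ (X ω) ∂μ) - φ t0 := by
    rw [integral_sub hintX (integrable_const _), integral_const, probReal_univ]
    simp
  have hZYint : ∫ ω, (φ (Y ω) - φ t0) ∂ν = (∫ ω, φ (Y ω) ∂ν) - φ t0 := by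
    rw [integral_sub hintY (integrable_const _), integral_const, probReal_univ]
    simp
  rw [hZXint, hZYint] at key
  linarith
end
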